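/- Let A be a Koszul DG algebra such that the trivial module k is a compact object of the derived category D(A). Then the Ext-algebra E = Ext^0_A(k,k) is a finite dimensional local k-algebra with residue field E/J ≅ k, where J is the Jacobson radical of E; moreover J = F_1 for the standard filtration on E. -/

import Mathlib

/-!
Minimality makes every augmented coordinate functional `m ↦ ε(m_l)` of the semibasis a
cocycle, which cannot be a coboundary; as `Ext^n = 0` for `n ≠ 0`, all basis vectors have
degree `0`. Connectedness then identifies `P⁰` with the `k`-span of the basis and makes
`H⁰(P) → k` injective, so each `x ∈ E` has a unique degree `0` lift `g_x : P → P`, built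
level by level, and `y·x = y ∘ g_x` is an associative unital product. A lift of `x ∈ F_n`
kills `P(j)` for `j < n` and maps `P(j + n)` into `P(j)`, so the filtration is
multiplicative; since `P = P(m)`, `F_{m+1} = 0` and `F₁` is nil. Finally `F₁` is the kernel
of evaluation at a degree `0` cocycle `e` with `εP e = 1`, so `E = k·1 ⊕ F₁`, and an element
outside `F₁` is a nonzero scalar times `1 - z` with `z` nilpotent, hence a unit.
-/

open scoped TensorProduct

variable (k : Type) [Field k]

/-- A (cochain) differential graded algebra over `k`: a `ℤ`-graded `k`-algebra
together with a degree `1` differential which is a graded derivation. -/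
structure DGA where
  A : Type
  [ringA : Ring A]
  [algA : Algebra k A]
  grading : ℤ → Submodule k A
  [gradedA : GradedAlgebra grading]
  d : A →ₗ[k] A
  d_deg : ∀ (n : ℤ) (a : A), a ∈ grading n → d a ∈ grading (n + 1)
  d_sq : ∀ a : A, d (d a) = 0
  leibniz : ∀ (i : ℤ) (a b : A), a ∈ grading i →
      d (a * b) = d a * b + (Int.negOnePow i : ℤ) • (a * d b)

attribute [instance] DGA.ringA DGA.algA DGA.gradedA

variable {k}

/-- A DG algebra is connected if it is concentrated in non-negative degrees
and its degree `0` part is `k·1`. -/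
def DGA.connected (𝔸 : DGA k) : Prop :=
  (∀ n : ℤ, n < 0 → 𝔸.grading n = ⊥) ∧ 𝔸.grading 0 = Submodule.span k {(1 : 𝔸.A)}

/-- An augmentation of a DG algebra: an algebra map to `k` killing the image of the
differential and all nonzero degrees.  (For a connected DG algebra this is the canonical
projection onto degree `0`.) -/
structure DGA.Aug (𝔸 : DGA k) where
  ε : 𝔸.A →ₐ[k] k
  ε_d : ∀ a, ε (𝔸.d a) = 0
  ε_deg : ∀ n : ℤ, n ≠ 0 → ∀ a ∈ 𝔸.grading n, ε a = 0

/-- A (left) differential graded module over a DG algebra. -/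
structure DGMod (𝔸 : DGA k) where
  M : Type
  [acg : AddCommGroup M]
  [amod : Module 𝔸.A M]
  [kmod : Module k M]
  [tower : IsScalarTower k 𝔸.A M]
  grading : ℤ → Submodule k M
  [decomp : DirectSum.Decomposition grading]
  smul_mem : ∀ (i j : ℤ) (a : 𝔸.A) (m : M), a ∈ 𝔸.grading i → m ∈ grading j →
      a • m ∈ grading (i + j)
  dM : M →ₗ[k] M
  dM_deg : ∀ (n : ℤ) (m : M), m ∈ grading n → dM m ∈ grading (n + 1)
  dM_sq : ∀ m : M, dM (dM m) = 0
  leibniz : ∀ (i : ℤ) (a : 𝔸.A) (m : M), a ∈ 𝔸.grading i →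
      dM (a • m) = 𝔸.d a • m + (Int.negOnePow i : ℤ) • (a • dM m)

attribute [instance] DGMod.acg DGMod.amod DGMod.kmod DGMod.tower DGMod.decomp

/-- The submodule `I(A)·M` where `I(A) = ker ε` is the augmentation ideal. -/
def DGMod.IP {𝔸 : DGA k} (ε : 𝔸.Aug) (P : DGMod 𝔸) : Submodule 𝔸.A P.M :=
  Submodule.span 𝔸.A {x | ∃ (a : 𝔸.A) (m : P.M), ε.ε a = 0 ∧ x = a • m}

/-- A DG module is minimal if `d(M) ⊆ I(A)·M`. -/
def DGMod.Minimal {𝔸 : DGA k} (ε : 𝔸.Aug) (P : DGMod 𝔸) : Prop :=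
  ∀ m : P.M, P.dM m ∈ P.IP ε

/-- A semifree resolution of the trivial DG module `k` over an augmented DG algebra:
a semifree DG module (with a chosen semibasis, witnessing semifreeness) together with a
quasi-isomorphism `εP` onto the trivial module `k` (concentrated in degree `0`,
with `A` acting via the augmentation). -/
structure SFR {𝔸 : DGA k} (ε : 𝔸.Aug) extends DGMod 𝔸 where
  ι : Type
  bas : Module.Basis ι 𝔸.A M
  degB : ι → ℤ
  homog : ∀ i, bas i ∈ grading (degB i)
  lvl : ι → ℕ
  d_lvl : ∀ i, dM (bas i) ∈ Submodule.span 𝔸.A (bas '' {j | lvl j < lvl i})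
  εP : M →ₗ[k] k
  εP_lin : ∀ (a : 𝔸.A) (m : M), εP (a • m) = ε.ε a * εP m
  εP_deg : ∀ n : ℤ, n ≠ 0 → ∀ m ∈ grading n, εP m = 0
  εP_d : ∀ m, εP (dM m) = 0
  qis_surj : ∃ m ∈ grading 0, dM m = 0 ∧ εP m = 1
  qis_ker : ∀ (n : ℤ) (m : M), m ∈ grading n → dM m = 0 → εP m = 0 →
      m ∈ LinearMap.range dM

/-- `Ext^n_A(k,k) = 0`, expressed via a semifree resolution `P` of `k`: every
`A`-semilinear functional `P → k` of cohomological degree `n` which is a cocycle is a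
coboundary in `Hom_A(P,k)`. -/
def ExtVanishAt {𝔸 : DGA k} (ε : 𝔸.Aug) (P : SFR ε) (n : ℤ) : Prop :=
  ∀ f : P.M →ₗ[k] k,
    (∀ (a : 𝔸.A) (m : P.M), f (a • m) = ε.ε a * f m) →
    (∀ i : ℤ, i ≠ -n → ∀ m ∈ P.grading i, f m = 0) →
    (∀ m, f (P.dM m) = 0) →
    ∃ g : P.M →ₗ[k] k,
      (∀ (a : 𝔸.A) (m : P.M), g (a • m) = ε.ε a * g m) ∧
      (∀ i : ℤ, i ≠ -(n - 1) → ∀ m ∈ P.grading i, g m = 0) ∧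
      ∀ m, f m = g (P.dM m)

/-- `Ext^n_A(k,k) = 0` for all `n ≠ 0` (the Koszul property, via Proposition 1.1). -/
def ExtVanish (𝔸 : DGA k) (ε : 𝔸.Aug) : Prop :=
  ∀ P : SFR ε, ∀ n : ℤ, n ≠ 0 → ExtVanishAt ε P n

/-- `Tor^n_A(k,k) = 0` for `n ≠ 0`: for any semifree resolution `P` of `k`, the complex
`k ⊗_A P = P/I(A)P` has vanishing cohomology in nonzero degrees. -/
def TorVanish (𝔸 : DGA k) (ε : 𝔸.Aug) : Prop :=
  ∀ P : SFR ε, ∀ n : ℤ, n ≠ 0 → ∀ m ∈ P.grading n,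
    P.dM m ∈ P.toDGMod.IP ε →
      ∃ y ∈ P.grading (n - 1), m - P.dM y ∈ P.toDGMod.IP ε

/-- `A` is a Koszul DG algebra: the trivial DG module `k` has a minimal semifree
resolution whose semibasis consists of elements of degree `0`. -/
def IsKoszul (𝔸 : DGA k) (ε : 𝔸.Aug) : Prop :=
  ∃ P : SFR ε, P.toDGMod.Minimal ε ∧ ∀ i, P.degB i = 0

/-- A presentation of the cohomology algebra `H(𝔸)` by a DG algebra `𝔹` (with zero
differential): a map defined on cocycles of `𝔸`, multiplicative, additive, grading
preserving, surjective, with kernel exactly the coboundaries. -/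
structure HPres (𝔸 𝔹 : DGA k) where
  φ : 𝔸.A → 𝔹.A
  map_add : ∀ a b, 𝔸.d a = 0 → 𝔸.d b = 0 → φ (a + b) = φ a + φ b
  map_smul : ∀ (c : k) (a), 𝔸.d a = 0 → φ (c • a) = c • φ a
  map_mul : ∀ a b, 𝔸.d a = 0 → 𝔸.d b = 0 → φ (a * b) = φ a * φ b
  map_one : φ 1 = 1
  surj : ∀ n : ℤ, ∀ y ∈ 𝔹.grading n, ∃ a, 𝔸.d a = 0 ∧ a ∈ 𝔸.grading n ∧ φ a = y
  ker : ∀ a, 𝔸.d a = 0 → (φ a = 0 ↔ a ∈ LinearMap.range 𝔸.d)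
  graded : ∀ (n : ℤ) (a), 𝔸.d a = 0 → a ∈ 𝔸.grading n → φ a ∈ 𝔹.grading n

/-- The `k`-span of the semibasis of `P`. -/
def SFR.kE {𝔸 : DGA k} {ε : 𝔸.Aug} (P : SFR ε) : Submodule k P.M :=
  Submodule.span k (Set.range P.bas)

/-- The standard semifree filtration of `P` associated to its semibasis:
`F(0) = A·(kE ∩ ker d)` and `F(n+1) = A·(kE ∩ d⁻¹ F(n))`. -/
def SFR.stdF {𝔸 : DGA k} {ε : 𝔸.Aug} (P : SFR ε) : ℕ → Submodule 𝔸.A P.M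
  | 0 => Submodule.span 𝔸.A ((P.kE ⊓ LinearMap.ker P.dM : Submodule k P.M) : Set P.M)
  | n + 1 => Submodule.span 𝔸.A
      ((P.kE ⊓ Submodule.comap P.dM ((SFR.stdF P n).restrictScalars k) :
        Submodule k P.M) : Set P.M)

/-- The underlying space of the Ext-algebra `E = Ext⁰_A(k,k)` of a Koszul DG algebra,
realized as the `A`-semilinear degree `0` cocycle functionals on a (minimal) semifree
resolution `P` of `k`. -/
def ExtSpace {𝔸 : DGA k} {ε : 𝔸.Aug} (P : SFR ε) : Submodule k (P.M →ₗ[k] k) where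
  carrier := {f | (∀ (a : 𝔸.A) (m : P.M), f (a • m) = ε.ε a * f m) ∧
      (∀ n : ℤ, n ≠ 0 → ∀ m ∈ P.grading n, f m = 0) ∧ ∀ m, f (P.dM m) = 0}
  add_mem' := by
    rintro f g ⟨hf1, hf2, hf3⟩ ⟨hg1, hg2, hg3⟩
    refine ⟨fun a m => ?_, fun n hn m hm => ?_, fun m => ?_⟩
    · simp [hf1, hg1, mul_add]
    · simp [hf2 n hn m hm, hg2 n hn m hm]
    · simp [hf3, hg3]
  zero_mem' := by
    exact ⟨fun a m => by simp, fun n hn m hm => rfl, fun m => rfl⟩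
  smul_mem' := by
    rintro c f ⟨hf1, hf2, hf3⟩
    refine ⟨fun a m => ?_, fun n hn m hm => ?_, fun m => ?_⟩
    · simp [hf1, mul_left_comm]
    · simp [hf2 n hn m hm]
    · simp [hf3]

/-- The unit of the Ext-algebra: the class of the resolution map `εP` itself. -/
def unitE {𝔸 : DGA k} {ε : 𝔸.Aug} (P : SFR ε) : ↥(ExtSpace P) :=
  ⟨P.εP, P.εP_lin, P.εP_deg, P.εP_d⟩

/-- `g : P → P` is a lift (through the resolution `εP : P → k`) of the Ext-class `x`:
an `A`-linear chain map of degree `0` with `εP ∘ g = x`. -/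
def IsLift {𝔸 : DGA k} {ε : 𝔸.Aug} (P : SFR ε) (g : P.M →ₗ[k] P.M)
    (x : ↥(ExtSpace P)) : Prop :=
  (∀ (a : 𝔸.A) (m : P.M), g (a • m) = a • g m) ∧
  (∀ n : ℤ, ∀ m ∈ P.grading n, g m ∈ P.grading n) ∧
  (∀ m, g (P.dM m) = P.dM (g m)) ∧
  (∀ m, (x : P.M →ₗ[k] k) m = P.εP (g m))

/-- `mul` is the Yoneda (composition) product on `E = Ext⁰_A(k,k)`:
`y·x = y ∘ g` for any lift `g` of `x`. -/
def MulCompat {𝔸 : DGA k} {ε : 𝔸.Aug} (P : SFR ε)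
    (mul : ↥(ExtSpace P) → ↥(ExtSpace P) → ↥(ExtSpace P)) : Prop :=
  ∀ (y x : ↥(ExtSpace P)) (g : P.M →ₗ[k] P.M), IsLift P g x →
    ∀ m, (↑(mul y x) : P.M →ₗ[k] k) m = (↑y : P.M →ₗ[k] k) (g m)

/-- `mul` makes `E` an associative unital `k`-algebra with unit `εP`, and is the
Yoneda product. -/
structure ExtMulOk {𝔸 : DGA k} {ε : 𝔸.Aug} (P : SFR ε)
    (mul : ↥(ExtSpace P) → ↥(ExtSpace P) → ↥(ExtSpace P)) : Prop where
  compat : MulCompat P mul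
  add_left : ∀ y₁ y₂ x, mul (y₁ + y₂) x = mul y₁ x + mul y₂ x
  add_right : ∀ y x₁ x₂, mul y (x₁ + x₂) = mul y x₁ + mul y x₂
  smul_left : ∀ (c : k) y x, mul (c • y) x = c • mul y x
  smul_right : ∀ (c : k) y x, mul y (c • x) = c • mul y x
  assoc : ∀ z y x, mul (mul z y) x = mul z (mul y x)
  one_mul : ∀ x, mul (unitE P) x = x
  mul_one : ∀ x, mul x (unitE P) = x

/-- The canonical decreasing filtration on the Ext-algebra: `F₀ = E` and
`F_{n+1} = {x ∈ E | x` vanishes on the standard filtration step `P(n)}`. -/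
noncomputable def Fil {𝔸 : DGA k} {ε : 𝔸.Aug} (P : SFR ε) : ℕ → Submodule k ↥(ExtSpace P)
  | 0 => ⊤
  | n + 1 => ⨅ (m : P.M) (_ : m ∈ P.stdF n),
      LinearMap.ker ((LinearMap.applyₗ m).comp (ExtSpace P).subtype)


theorem Fil_zero {𝔸 : DGA k} {ε : 𝔸.Aug} (P : SFR ε) : Fil P 0 = ⊤ := rfl

attribute [irreducible] ExtSpace Fil

instance {𝔸 : DGA k} {ε : 𝔸.Aug} (P : SFR ε) : AddCommGroup ↥(ExtSpace P) :=
  inferInstance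

instance {𝔸 : DGA k} {ε : 𝔸.Aug} (P : SFR ε) : Module k ↥(ExtSpace P) :=
  inferInstance

noncomputable instance {𝔸 : DGA k} {ε : 𝔸.Aug} (P : SFR ε) (n : ℕ) :
    AddCommGroup ↥(Fil P n) := inferInstance

noncomputable instance {𝔸 : DGA k} {ε : 𝔸.Aug} (P : SFR ε) (n : ℕ) :
    Module k ↥(Fil P n) := inferInstance
/-- Powers with respect to a (Yoneda) multiplication on the Ext-space. -/
def mulPow {𝔸 : DGA k} {ε : 𝔸.Aug} (P : SFR ε)
    (mul : ↥(ExtSpace P) → ↥(ExtSpace P) → ↥(ExtSpace P)) (x : ↥(ExtSpace P)) :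
    ℕ → ↥(ExtSpace P)
  | 0 => unitE P
  | n + 1 => mul x (mulPow P mul x n)

/-- The `n`-th graded piece `F_n/F_{n+1}` of the associated graded algebra of the
filtered Ext-algebra. -/
def GrPiece {𝔸 : DGA k} {ε : 𝔸.Aug} (P : SFR ε) (n : ℕ) :=
  ↥(Fil P n) ⧸ Submodule.comap (Fil P n).subtype (Fil P (n + 1))

noncomputable instance {𝔸 : DGA k} {ε : 𝔸.Aug} (P : SFR ε) (n : ℕ) :
    AddCommGroup (GrPiece P n) := by unfold GrPiece; infer_instance

noncomputable instance {𝔸 : DGA k} {ε : 𝔸.Aug} (P : SFR ε) (n : ℕ) :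
    Module k (GrPiece P n) := by unfold GrPiece; infer_instance

/-- The class of an element of `F_n` in the graded piece `F_n/F_{n+1}`. -/
noncomputable def grMk {𝔸 : DGA k} {ε : 𝔸.Aug} (P : SFR ε) (n : ℕ) (x : ↥(Fil P n)) : GrPiece P n :=
  Submodule.Quotient.mk x

theorem apply_mem_of_mem_span {A B M N F : Type*} [Semiring A] [Semiring B]
    [AddCommMonoid M] [Module A M] [AddCommMonoid N] [Module B N]
    [FunLike F M N] [AddMonoidHomClass F M N] (f : F) (ψ : A → B)
    (hf : ∀ (a : A) (m : M), f (a • m) = ψ a • f m) {s : Set M} {p : Submodule B N}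
    (hs : ∀ u ∈ s, f u ∈ p) {m : M} (hm : m ∈ Submodule.span A s) : f m ∈ p := by
  induction hm using Submodule.span_induction with
  | mem u hu => exact hs u hu
  | zero => simp
  | add u v _ _ hu hv => rw [map_add]; exact add_mem hu hv
  | smul a u _ hu => rw [hf]; exact p.smul_mem _ hu

theorem isCompl_span_singleton_ker_of_apply_eq_one {K V : Type*} [Field K] [AddCommGroup V]
    [Module K V] {φ : V →ₗ[K] K} {u : V} (hu : φ u = 1) :
    IsCompl (Submodule.span K {u}) (LinearMap.ker φ) := by
  have hsurj : Function.Surjective φ := fun c => ⟨c • u, by simp [hu]⟩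
  exact (Submodule.isCompl_span_singleton_of_isCoatom_of_notMem
    (LinearMap.isCoatom_ker_of_surjective hsurj) (by simp [hu])).symm

theorem isUnit_of_apply_ne_zero {K E : Type*} [Field K] [Ring E] [Algebra K E]
    (φ : E →ₗ[K] K) (h1 : φ 1 = 1) (hnil : ∀ z, φ z = 0 → IsNilpotent z) {x : E}
    (hx : φ x ≠ 0) : IsUnit x := by
  set z := 1 - (φ x)⁻¹ • x
  have hz : φ z = 0 := by simp [z, h1, inv_mul_cancel₀ hx]
  have hx_eq : x = algebraMap K E (φ x) * (1 - z) := by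
    simp [z, Algebra.smul_def, ← mul_assoc, ← map_mul, mul_inv_cancel₀ hx]
  rw [hx_eq]
  exact ((Units.mk0 _ hx).isUnit.map (algebraMap K E)).mul (hnil z hz).isUnit_one_sub

namespace DGMod

variable {𝔸 : DGA k} (P : DGMod 𝔸)

open DirectSum

theorem decompose_smul_of_mem {d : ℤ} {b : P.M} (hb : b ∈ P.grading d) (c : 𝔸.A) (n : ℤ) :
    (decompose P.grading (c • b) n : P.M) =
      (decompose 𝔸.grading c (n - d) : 𝔸.A) • b := by
  induction c using DirectSum.Decomposition.inductionOn 𝔸.grading with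
  | zero => simp
  | @homogeneous i c =>
    have hcb := P.smul_mem _ _ _ _ c.2 hb
    by_cases h : i = n - d
    · subst h
      rw [sub_add_cancel] at hcb
      rw [decompose_of_mem_same _ hcb, decompose_coe, of_eq_same]
    · rw [decompose_of_mem_ne _ hcb (by omega), decompose_coe, of_eq_of_ne _ _ _ (Ne.symm h),
        ZeroMemClass.coe_zero, zero_smul]
  | add a a' ha ha' => rw [add_smul, decompose_add, decompose_add]; simp [ha, ha', add_smul]

theorem decompose_dM (y : P.M) (n : ℤ) :
    (decompose P.grading (P.dM y) (n + 1) : P.M) = P.dM (decompose P.grading y n) := by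
  induction y using DirectSum.Decomposition.inductionOn P.grading with
  | zero => simp
  | @homogeneous i y =>
    have hdy := P.dM_deg _ _ y.2
    by_cases h : i = n
    · subst h
      rw [decompose_of_mem_same _ hdy, decompose_coe, of_eq_same]
    · rw [decompose_of_mem_ne _ hdy (by omega), decompose_coe, of_eq_of_ne _ _ _ (Ne.symm h),
        ZeroMemClass.coe_zero, map_zero]
  | add y y' hy hy' => simp [decompose_add, hy, hy']

end DGMod

theorem DGMod.dM_comm_of_mem_span {𝔸 : DGA k} {P Q : DGMod 𝔸} (f : P.M →ₗ[𝔸.A] Q.M)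
    {s : Set P.M} (hs : ∀ u ∈ s, Q.dM (f u) = f (P.dM u)) {m : P.M}
    (hm : m ∈ Submodule.span 𝔸.A s) : Q.dM (f m) = f (P.dM m) := by
  induction hm using Submodule.span_induction with
  | mem u hu => exact hs u hu
  | zero => simp
  | add u v _ _ hu hv => simp only [map_add, hu, hv]
  | smul a u _ hu =>
    induction a using DirectSum.Decomposition.inductionOn 𝔸.grading with
    | zero => simp
    | @homogeneous i a =>
      rw [map_smul, Q.leibniz i _ _ a.2, P.leibniz i _ _ a.2, map_add, map_zsmul, map_smul,
        map_smul, hu]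
    | add a b ha hb => simp only [add_smul, map_add, ha, hb]

namespace ExtSpace

variable {𝔸 : DGA k} {ε : 𝔸.Aug} {P : SFR ε}

unseal ExtSpace in
theorem mem_iff (f : P.M →ₗ[k] k) : f ∈ ExtSpace P ↔
    (∀ (a : 𝔸.A) (m : P.M), f (a • m) = ε.ε a * f m) ∧
      (∀ n : ℤ, n ≠ 0 → ∀ m ∈ P.grading n, f m = 0) ∧ ∀ m, f (P.dM m) = 0 :=
  Iff.rfl

theorem apply_smul (x : ExtSpace P) (a : 𝔸.A) (m : P.M) :
    (x : P.M →ₗ[k] k) (a • m) = ε.ε a * (x : P.M →ₗ[k] k) m :=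
  ((mem_iff _).1 x.2).1 a m

@[ext]
theorem ext {x y : ExtSpace P} (h : ∀ m, (x : P.M →ₗ[k] k) m = (y : P.M →ₗ[k] k) m) :
    x = y :=
  Subtype.ext (LinearMap.ext h)

end ExtSpace

unseal Fil in
theorem mem_Fil_succ_iff {𝔸 : DGA k} {ε : 𝔸.Aug} (P : SFR ε) (n : ℕ) (x : ExtSpace P) :
    x ∈ Fil P (n + 1) ↔ ∀ m ∈ P.stdF n, (x : P.M →ₗ[k] k) m = 0 := by
  simp [Fil, Submodule.mem_iInf, LinearMap.mem_ker]

namespace SFR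

variable {𝔸 : DGA k} {ε : 𝔸.Aug} (P : SFR ε)

open DirectSum

theorem repr_mem_grading [Fintype P.ι] {n : ℤ} {m : P.M} (hm : m ∈ P.grading n) (l : P.ι) :
    P.bas.repr m l ∈ 𝔸.grading (n - P.degB l) := by
  classical
  set c : P.ι → 𝔸.A := fun i => decompose 𝔸.grading (P.bas.repr m i) (n - P.degB i)
  have hm_eq : m = ∑ i, c i • P.bas i := by
    calc m = decompose P.grading m n := (decompose_of_mem_same _ hm).symm
      _ = ∑ i, (decompose P.grading (P.bas.repr m i • P.bas i) n : P.M) := by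
        conv_lhs => rw [← P.bas.sum_repr m]
        rw [decompose_sum, DFinsupp.finsetSum_apply, Submodule.coe_sum]
      _ = ∑ i, c i • P.bas i := by
        simp only [P.decompose_smul_of_mem (P.homog _), c]
  have hcoeff : P.bas.repr m l = c l := by
    conv_lhs => rw [hm_eq]
    rw [P.bas.repr_sum_self]
  rw [hcoeff]
  exact SetLike.coe_mem _

noncomputable def augCoord (l : P.ι) : P.M →ₗ[k] k :=
  ε.ε.toLinearMap ∘ₗ (P.bas.coord l).restrictScalars k

theorem augCoord_apply (l : P.ι) (m : P.M) : P.augCoord l m = ε.ε (P.bas.repr m l) := rfl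

theorem augCoord_smul (l : P.ι) (a : 𝔸.A) (m : P.M) :
    P.augCoord l (a • m) = ε.ε a * P.augCoord l m := by
  simp [augCoord_apply]

theorem augCoord_bas (l : P.ι) : P.augCoord l (P.bas l) = 1 := by
  simp [augCoord_apply]

theorem augCoord_of_mem_grading [Fintype P.ι] (l : P.ι) {n : ℤ} (hn : n ≠ P.degB l) {m : P.M}
    (hm : m ∈ P.grading n) : P.augCoord l m = 0 :=
  ε.ε_deg _ (sub_ne_zero.2 hn) _ (P.repr_mem_grading hm l)

theorem apply_eq_zero_of_mem_IP {f : P.M →ₗ[k] k}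
    (hf : ∀ (a : 𝔸.A) (m : P.M), f (a • m) = ε.ε a * f m) {w : P.M}
    (hw : w ∈ P.toDGMod.IP ε) : f w = 0 := by
  refine (Submodule.mem_bot k).1 (apply_mem_of_mem_span f ε.ε hf ?_ hw)
  rintro _ ⟨a, m, ha, rfl⟩
  simp [hf, ha]

theorem degB_eq_zero [Fintype P.ι] (hKoszul : ExtVanish 𝔸 ε) (hmin : P.toDGMod.Minimal ε)
    (l : P.ι) : P.degB l = 0 := by
  by_contra hne
  obtain ⟨g, hg_smul, -, hg⟩ := hKoszul P (-P.degB l) (neg_ne_zero.2 hne) (P.augCoord l)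
    (P.augCoord_smul l) (fun i hi m hm => P.augCoord_of_mem_grading l (by omega) hm)
    (fun m => P.apply_eq_zero_of_mem_IP (P.augCoord_smul l) (hmin m))
  have h := P.augCoord_bas l
  rw [hg, P.apply_eq_zero_of_mem_IP hg_smul (hmin _)] at h
  exact zero_ne_one h

theorem kE_le_grading_zero (hdeg : ∀ i, P.degB i = 0) : P.kE ≤ P.grading 0 :=
  Submodule.span_le.2 (by rintro _ ⟨i, rfl⟩; exact hdeg i ▸ P.homog i)

section DegreeZero

variable [Fintype P.ι]

theorem repr_eq_algebraMap_augCoord (hconn : 𝔸.connected) (hdeg : ∀ i, P.degB i = 0)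
    {w : P.M} (hw : w ∈ P.grading 0) (l : P.ι) :
    P.bas.repr w l = algebraMap k 𝔸.A (P.augCoord l w) := by
  have hr := P.repr_mem_grading hw l
  rw [hdeg, sub_zero, hconn.2] at hr
  obtain ⟨c, hc⟩ := Submodule.mem_span_singleton.1 hr
  rw [augCoord_apply, ← hc, map_smul, map_one, smul_eq_mul, mul_one,
    Algebra.algebraMap_eq_smul_one]

theorem mem_kE_of_mem_grading_zero (hconn : 𝔸.connected) (hdeg : ∀ i, P.degB i = 0)
    {w : P.M} (hw : w ∈ P.grading 0) : w ∈ P.kE := by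
  rw [← P.bas.sum_repr w]
  refine sum_mem fun i _ => ?_
  rw [P.repr_eq_algebraMap_augCoord hconn hdeg hw, algebraMap_smul]
  exact Submodule.smul_mem _ _ (Submodule.subset_span ⟨i, rfl⟩)

theorem eq_zero_of_mem_IP (hconn : 𝔸.connected) (hdeg : ∀ i, P.degB i = 0) {w : P.M}
    (hw0 : w ∈ P.grading 0) (hw : w ∈ P.toDGMod.IP ε) : w = 0 := by
  refine P.bas.ext_elem fun l => ?_
  rw [P.repr_eq_algebraMap_augCoord hconn hdeg hw0,
    P.apply_eq_zero_of_mem_IP (P.augCoord_smul l) hw]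
  simp

theorem eq_zero_of_cocycle (hconn : 𝔸.connected) (hdeg : ∀ i, P.degB i = 0)
    (hmin : P.toDGMod.Minimal ε) {w : P.M} (hw0 : w ∈ P.grading 0) (hdw : P.dM w = 0)
    (hεw : P.εP w = 0) : w = 0 := by
  obtain ⟨y, rfl⟩ := P.qis_ker 0 w hw0 hdw hεw
  exact P.eq_zero_of_mem_IP hconn hdeg hw0 (hmin y)

theorem eq_smul_of_cocycle (hconn : 𝔸.connected) (hdeg : ∀ i, P.degB i = 0)
    (hmin : P.toDGMod.Minimal ε) {e : P.M} (he0 : e ∈ P.grading 0) (hde : P.dM e = 0)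
    (hεe : P.εP e = 1) {u : P.M} (hu0 : u ∈ P.grading 0) (hdu : P.dM u = 0) :
    u = P.εP u • e :=
  sub_eq_zero.1 (P.eq_zero_of_cocycle hconn hdeg hmin
    (sub_mem hu0 (Submodule.smul_mem _ _ he0)) (by simp [hdu, hde]) (by simp [hεe]))

end DegreeZero

theorem exists_preimage_of_cocycle {w : P.M} (hw : w ∈ P.grading 1) (hdw : P.dM w = 0)
    (c : k) : ∃ y ∈ P.grading 0, P.εP y = c ∧ P.dM y = w := by
  classical
  obtain ⟨y, rfl⟩ := P.qis_ker 1 _ hw hdw (P.εP_deg 1 one_ne_zero _ hw)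
  obtain ⟨e, he0, hde, hεe⟩ := P.qis_surj
  set y₀ : P.M := ↑(decompose P.grading y 0)
  have hy₀ : P.dM y₀ = P.dM y := by
    rw [← P.decompose_dM y 0, zero_add, decompose_of_mem_same _ hw]
  exact ⟨y₀ + (c - P.εP y₀) • e, add_mem (SetLike.coe_mem _) (Submodule.smul_mem _ _ he0),
    by simp [hεe], by simp [hde, hy₀]⟩

theorem map_mem_grading_of_mem_span [Fintype P.ι] (f : P.M →ₗ[𝔸.A] P.M) {s : Set P.ι}
    (hs : ∀ j ∈ s, f (P.bas j) ∈ P.grading (P.degB j)) {m : P.M}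
    (hm : m ∈ Submodule.span 𝔸.A (P.bas '' s)) {n : ℤ} (hmn : m ∈ P.grading n) :
    f m ∈ P.grading n := by
  rw [← P.bas.sum_repr m, map_sum]
  refine sum_mem fun j _ => ?_
  by_cases hj : j ∈ s
  · rw [map_smul]
    simpa using P.smul_mem _ _ _ _ (P.repr_mem_grading hmn j) (hs j hj)
  · rw [(P.bas.repr m).notMem_support_iff.1 fun h => hj (P.bas.mem_span_image.1 hm h),
      zero_smul, map_zero]
    exact zero_mem _

theorem eq_zero_of_apply_bas {f : P.M →ₗ[k] k}
    (hf : ∀ (a : 𝔸.A) (m : P.M), f (a • m) = ε.ε a * f m) (h : ∀ i, f (P.bas i) = 0) :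
    f = 0 := by
  ext m
  refine (Submodule.mem_bot k).1 (apply_mem_of_mem_span f ε.ε hf ?_
    (P.bas.span_eq ▸ Submodule.mem_top : m ∈ Submodule.span 𝔸.A (Set.range P.bas)))
  rintro _ ⟨i, rfl⟩
  exact (Submodule.mem_bot k).2 (h i)

/-- On `bas i` the chain condition only involves values on lower levels, and the obstruction
`g (d (bas i))` is a degree `1` cocycle, hence a coboundary. -/
theorem exists_lift_values [Fintype P.ι] (hdeg : ∀ i, P.degB i = 0) (x : P.M →ₗ[k] k)
    (N : ℕ) : ∃ v : P.ι → P.M, ∀ i, P.lvl i < N → v i ∈ P.grading 0 ∧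
      P.εP (v i) = x (P.bas i) ∧ P.dM (v i) = P.bas.constr k v (P.dM (P.bas i)) := by
  induction N with
  | zero => exact ⟨0, fun i hi => absurd hi (Nat.not_lt_zero _)⟩
  | succ N ih =>
    obtain ⟨v, hv⟩ := ih
    set S := Submodule.span 𝔸.A (P.bas '' {j | P.lvl j < N})
    have hdS : ∀ i, P.lvl i ≤ N → P.dM (P.bas i) ∈ S := fun i hi =>
      Submodule.span_mono (Set.image_mono fun j hj => lt_of_lt_of_le hj hi) (P.d_lvl i)
    have hchain : ∀ m ∈ S, P.dM (P.bas.constr k v m) = P.bas.constr k v (P.dM m) :=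
      fun m hm => DGMod.dM_comm_of_mem_span (P := P.toDGMod) (Q := P.toDGMod) _
        (by rintro _ ⟨j, hj, rfl⟩; rw [Module.Basis.constr_basis]; exact (hv j hj).2.2) hm
    have hy : ∀ i, P.lvl i ≤ N → ∃ y ∈ P.grading 0, P.εP y = x (P.bas i) ∧
        P.dM y = P.bas.constr k v (P.dM (P.bas i)) := by
      intro i hi
      have hbas : P.bas i ∈ P.grading 0 := hdeg i ▸ P.homog i
      refine P.exists_preimage_of_cocycle (P.map_mem_grading_of_mem_span _ (fun j hj => ?_)
        (hdS i hi) (by simpa using P.dM_deg 0 _ hbas)) ?_ _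
      · rw [Module.Basis.constr_basis, hdeg]; exact (hv j hj).1
      · rw [hchain _ (hdS i hi), P.dM_sq, map_zero]
    choose! y hy using hy
    classical
    refine ⟨fun i => if P.lvl i < N then v i else y i, fun i hi => ?_⟩
    have hagree : P.bas.constr k (fun i => if P.lvl i < N then v i else y i) (P.dM (P.bas i))
        = P.bas.constr k v (P.dM (P.bas i)) := by
      refine LinearMap.eqOn_span' (fun m hm => ?_) (hdS i (Nat.lt_succ_iff.1 hi))
      obtain ⟨j, hj, rfl⟩ := hm
      simp only [Module.Basis.constr_basis, if_pos (show P.lvl j < N from hj)]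
    rw [hagree]
    by_cases h : P.lvl i < N
    · simpa [h] using hv i h
    · simpa [h] using hy i (by omega)

theorem exists_isLift [Fintype P.ι] (hdeg : ∀ i, P.degB i = 0) (x : ExtSpace P) :
    ∃ g, IsLift P g x := by
  obtain ⟨v, hv⟩ := P.exists_lift_values hdeg x (Finset.univ.sup P.lvl + 1)
  replace hv := fun i => hv i (Nat.lt_succ_of_le (Finset.le_sup (Finset.mem_univ i)))
  set f := P.bas.constr k v
  have hf : ∀ j, f (P.bas j) = v j := P.bas.constr_basis k v
  have htop : ∀ m, m ∈ Submodule.span 𝔸.A (P.bas '' Set.univ) := by simp [P.bas.span_eq]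
  refine ⟨f.restrictScalars k, f.map_smul, fun n m hm => ?_, fun m => ?_, fun m => ?_⟩
  · exact P.map_mem_grading_of_mem_span f (fun j _ => by simpa [hf, hdeg] using (hv j).1)
      (htop m) hm
  · exact (DGMod.dM_comm_of_mem_span (P := P.toDGMod) (Q := P.toDGMod) f
      (by rintro _ ⟨j, -, rfl⟩; rw [hf]; exact (hv j).2.2) (htop m)).symm
  · have h := P.eq_zero_of_apply_bas
      (f := (x : P.M →ₗ[k] k) - P.εP ∘ₗ f.restrictScalars k)
      (fun a m => by simp [ExtSpace.apply_smul, P.εP_lin, mul_sub])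
      (fun i => by simp [hf, (hv i).2.1])
    exact sub_eq_zero.1 (LinearMap.congr_fun h m)

theorem mem_stdF_zero {u : P.M} (hu : u ∈ P.kE) (hdu : P.dM u = 0) : u ∈ P.stdF 0 :=
  Submodule.subset_span ⟨hu, hdu⟩

theorem mem_stdF_succ {u : P.M} {j : ℕ} (hu : u ∈ P.kE) (hdu : P.dM u ∈ P.stdF j) :
    u ∈ P.stdF (j + 1) :=
  Submodule.subset_span ⟨hu, hdu⟩

theorem stdF_le_succ (j : ℕ) : P.stdF j ≤ P.stdF (j + 1) := by
  induction j with
  | zero =>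
    exact Submodule.span_le.2 fun u ⟨hu, hdu⟩ =>
      P.mem_stdF_succ hu (by rw [LinearMap.mem_ker.1 hdu]; exact zero_mem _)
  | succ j ih => exact Submodule.span_le.2 fun u ⟨hu, hdu⟩ => P.mem_stdF_succ hu (ih hdu)

theorem stdF_mono : Monotone P.stdF :=
  monotone_nat_of_le_succ P.stdF_le_succ

theorem bas_mem_stdF (i : P.ι) : P.bas i ∈ P.stdF (P.lvl i) := by
  induction hi : P.lvl i using Nat.strong_induction_on generalizing i with
  | _ N ih =>
    have hbas : P.bas i ∈ P.kE := Submodule.subset_span ⟨i, rfl⟩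
    rcases N with _ | t
    · exact P.mem_stdF_zero hbas (by simpa [hi] using P.d_lvl i)
    · refine P.mem_stdF_succ hbas (Submodule.span_le.2 ?_ (P.d_lvl i))
      rintro _ ⟨j, hj, rfl⟩
      have hj : P.lvl j < t + 1 := hi ▸ hj
      exact P.stdF_mono (Nat.lt_succ_iff.1 hj) (ih _ hj j rfl)

theorem stdF_eq_top [Fintype P.ι] : P.stdF (Finset.univ.sup P.lvl) = ⊤ := by
  rw [eq_top_iff, ← P.bas.span_eq, Submodule.span_le]
  rintro _ ⟨i, rfl⟩
  exact P.stdF_mono (Finset.le_sup (Finset.mem_univ i)) (P.bas_mem_stdF i)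

theorem apply_eq_zero_of_mem_Fil {x : ExtSpace P} {n j : ℕ} (hx : x ∈ Fil P n) (hj : j < n)
    {u : P.M} (hu : u ∈ P.stdF j) : (x : P.M →ₗ[k] k) u = 0 := by
  obtain ⟨n, rfl⟩ : ∃ n', n = n' + 1 := ⟨n - 1, by omega⟩
  exact (mem_Fil_succ_iff P n x).1 hx u (P.stdF_mono (by omega) hu)

theorem Fil_eq_bot [Fintype P.ι] : Fil P (Finset.univ.sup P.lvl + 1) = ⊥ := by
  refine eq_bot_iff.2 fun x hx => (Submodule.mem_bot k).2 (ExtSpace.ext fun m => ?_)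
  exact (mem_Fil_succ_iff P _ x).1 hx m (P.stdF_eq_top ▸ Submodule.mem_top)

end SFR

namespace IsLift

variable {𝔸 : DGA k} {ε : 𝔸.Aug} {P : SFR ε} {g h : P.M →ₗ[k] P.M} {x y : ExtSpace P}

theorem map_mem_grading (hg : IsLift P g x) {n : ℤ} {m : P.M} (hm : m ∈ P.grading n) :
    g m ∈ P.grading n :=
  hg.2.1 n m hm

theorem map_dM (hg : IsLift P g x) (m : P.M) : g (P.dM m) = P.dM (g m) :=
  hg.2.2.1 m

theorem apply_eq_εP (hg : IsLift P g x) (m : P.M) : (x : P.M →ₗ[k] k) m = P.εP (g m) :=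
  hg.2.2.2 m

/-- Minimality and connectedness make `H⁰(P) → k` injective, so a lift is determined by
induction on the level of the basis vectors. -/
theorem unique [Fintype P.ι] (hconn : 𝔸.connected) (hdeg : ∀ i, P.degB i = 0)
    (hmin : P.toDGMod.Minimal ε) (hg : IsLift P g x) (hh : IsLift P h x) : g = h := by
  obtain ⟨hg_smul, hg_deg, hg_d, hg_ε⟩ := hg
  obtain ⟨hh_smul, hh_deg, hh_d, hh_ε⟩ := hh
  have hsmul : ∀ (a : 𝔸.A) (m : P.M), (g - h) (a • m) = id a • (g - h) m := fun a m => by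
    simp [hg_smul, hh_smul, smul_sub]
  have hbas : ∀ i, (g - h) (P.bas i) = 0 := by
    intro i
    induction hi : P.lvl i using Nat.strong_induction_on generalizing i with
    | _ N ih =>
      have hlow : (g - h) (P.dM (P.bas i)) = 0 := (Submodule.mem_bot 𝔸.A).1
        (apply_mem_of_mem_span (g - h) id hsmul
          (by
            rintro _ ⟨j, hj, rfl⟩
            exact (Submodule.mem_bot 𝔸.A).2 (ih _ (hi ▸ hj) j rfl))
          (P.d_lvl i))
      have hbas0 : P.bas i ∈ P.grading 0 := hdeg i ▸ P.homog i
      refine P.eq_zero_of_cocycle hconn hdeg hmin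
        (sub_mem (hg_deg _ _ hbas0) (hh_deg _ _ hbas0)) ?_ ?_
      · simpa [hg_d, hh_d] using hlow
      · simp [← hg_ε, ← hh_ε]
  ext m
  refine sub_eq_zero.1 ((Submodule.mem_bot 𝔸.A).1 (apply_mem_of_mem_span (g - h) id hsmul
    (s := Set.range P.bas) ?_ (P.bas.span_eq ▸ Submodule.mem_top)))
  rintro _ ⟨i, rfl⟩
  exact (Submodule.mem_bot 𝔸.A).2 (hbas i)

theorem comp_mem (hg : IsLift P g x) (y : ExtSpace P) :
    (y : P.M →ₗ[k] k) ∘ₗ g ∈ ExtSpace P := by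
  obtain ⟨hg_smul, hg_deg, hg_d, -⟩ := hg
  obtain ⟨hy_smul, hy_deg, hy_d⟩ := (ExtSpace.mem_iff _).1 y.2
  refine (ExtSpace.mem_iff _).2 ⟨fun a m => ?_, fun n hn m hm => hy_deg n hn _ (hg_deg n m hm),
    fun m => ?_⟩
  · simp [hg_smul, hy_smul]
  · simp [hg_d, hy_d]

theorem comp (hg : IsLift P g x) (hh : IsLift P h y) :
    IsLift P (h ∘ₗ g) ⟨(y : P.M →ₗ[k] k) ∘ₗ g, hg.comp_mem y⟩ := by
  obtain ⟨hg_smul, hg_deg, hg_d, -⟩ := hg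
  obtain ⟨hh_smul, hh_deg, hh_d, hh_ε⟩ := hh
  exact ⟨fun a m => by simp [hg_smul, hh_smul], fun n m hm => hh_deg n _ (hg_deg n m hm),
    fun m => by simp [hg_d, hh_d], fun m => hh_ε (g m)⟩

theorem add (hg : IsLift P g x) (hh : IsLift P h y) : IsLift P (g + h) (x + y) := by
  obtain ⟨hg_smul, hg_deg, hg_d, hg_ε⟩ := hg
  obtain ⟨hh_smul, hh_deg, hh_d, hh_ε⟩ := hh
  exact ⟨fun a m => by simp [hg_smul, hh_smul], fun n m hm => add_mem (hg_deg n m hm)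
    (hh_deg n m hm), fun m => by simp [hg_d, hh_d], fun m => by simp [hg_ε, hh_ε]⟩

theorem smul (c : k) (hg : IsLift P g x) : IsLift P (c • g) (c • x) := by
  obtain ⟨hg_smul, hg_deg, hg_d, hg_ε⟩ := hg
  exact ⟨fun a m => by simp [hg_smul, smul_comm c a], fun n m hm =>
    Submodule.smul_mem _ _ (hg_deg n m hm), fun m => by simp [hg_d], fun m => by simp [hg_ε]⟩

theorem eq_zero_of_mem_kE [Fintype P.ι] (hconn : 𝔸.connected) (hdeg : ∀ i, P.degB i = 0)
    (hmin : P.toDGMod.Minimal ε) (hg : IsLift P g x) {u : P.M} (hu : u ∈ P.kE)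
    (hdu : g (P.dM u) = 0) (hxu : (x : P.M →ₗ[k] k) u = 0) : g u = 0 :=
  P.eq_zero_of_cocycle hconn hdeg hmin (hg.map_mem_grading (P.kE_le_grading_zero hdeg hu))
    (by rw [← hg.map_dM, hdu]) (by rw [← hg.apply_eq_εP, hxu])

theorem map_mem_kE [Fintype P.ι] (hconn : 𝔸.connected) (hdeg : ∀ i, P.degB i = 0)
    (hg : IsLift P g x) {u : P.M} (hu : u ∈ P.kE) : g u ∈ P.kE :=
  P.mem_kE_of_mem_grading_zero hconn hdeg (hg.map_mem_grading (P.kE_le_grading_zero hdeg hu))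

theorem map_stdF_eq_zero [Fintype P.ι] (hconn : 𝔸.connected) (hdeg : ∀ i, P.degB i = 0)
    (hmin : P.toDGMod.Minimal ε) (hg : IsLift P g x) {n : ℕ} (hx : x ∈ Fil P n) :
    ∀ j < n, ∀ u ∈ P.stdF j, g u = 0 := by
  have hsmul : ∀ (a : 𝔸.A) (m : P.M), g (a • m) = id a • g m := hg.1
  intro j
  induction j with
  | zero =>
    intro hj u hu
    refine (Submodule.mem_bot 𝔸.A).1 (apply_mem_of_mem_span g id hsmul ?_ hu)
    rintro u ⟨hu, hdu⟩
    exact (Submodule.mem_bot 𝔸.A).2 (hg.eq_zero_of_mem_kE hconn hdeg hmin hu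
      (by rw [LinearMap.mem_ker.1 hdu, map_zero])
      (P.apply_eq_zero_of_mem_Fil hx hj (P.mem_stdF_zero hu hdu)))
  | succ j ih =>
    intro hj u hu
    refine (Submodule.mem_bot 𝔸.A).1 (apply_mem_of_mem_span g id hsmul ?_ hu)
    rintro u ⟨hu, hdu⟩
    exact (Submodule.mem_bot 𝔸.A).2 (hg.eq_zero_of_mem_kE hconn hdeg hmin hu
      (ih (by omega) _ hdu) (P.apply_eq_zero_of_mem_Fil hx hj (P.mem_stdF_succ hu hdu)))

theorem map_stdF_add [Fintype P.ι] (hconn : 𝔸.connected) (hdeg : ∀ i, P.degB i = 0)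
    (hmin : P.toDGMod.Minimal ε) (hg : IsLift P g x) {n : ℕ} (hx : x ∈ Fil P n) :
    ∀ j, ∀ u ∈ P.stdF (j + n), g u ∈ P.stdF j := by
  have hsmul : ∀ (a : 𝔸.A) (m : P.M), g (a • m) = id a • g m := hg.1
  intro j
  induction j with
  | zero =>
    intro u hu
    rw [zero_add] at hu
    rcases n with _ | t
    · refine apply_mem_of_mem_span g id hsmul ?_ hu
      rintro u ⟨hu, hdu⟩
      exact P.mem_stdF_zero (hg.map_mem_kE hconn hdeg hu)
        (by rw [← hg.map_dM, LinearMap.mem_ker.1 hdu, map_zero])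
    · refine apply_mem_of_mem_span g id hsmul ?_ hu
      rintro u ⟨hu, hdu⟩
      exact P.mem_stdF_zero (hg.map_mem_kE hconn hdeg hu)
        (by rw [← hg.map_dM, hg.map_stdF_eq_zero hconn hdeg hmin hx t (by omega) _ hdu])
  | succ j ih =>
    intro u hu
    rw [add_right_comm] at hu
    refine apply_mem_of_mem_span g id hsmul ?_ hu
    rintro u ⟨hu, hdu⟩
    exact P.mem_stdF_succ (hg.map_mem_kE hconn hdeg hu) (hg.map_dM u ▸ ih _ hdu)

end IsLift

theorem isLift_id {𝔸 : DGA k} {ε : 𝔸.Aug} (P : SFR ε) : IsLift P LinearMap.id (unitE P) :=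
  ⟨fun _ _ => rfl, fun _ _ hm => hm, fun _ => rfl, fun _ => rfl⟩

namespace SFR

variable {𝔸 : DGA k} {ε : 𝔸.Aug} (P : SFR ε) [Fintype P.ι]

noncomputable def extLift (hdeg : ∀ i, P.degB i = 0) (x : ExtSpace P) : P.M →ₗ[k] P.M :=
  (P.exists_isLift hdeg x).choose

theorem isLift_extLift (hdeg : ∀ i, P.degB i = 0) (x : ExtSpace P) :
    IsLift P (P.extLift hdeg x) x :=
  (P.exists_isLift hdeg x).choose_spec

noncomputable def extMul (hdeg : ∀ i, P.degB i = 0) (y x : ExtSpace P) : ExtSpace P :=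
  ⟨(y : P.M →ₗ[k] k) ∘ₗ P.extLift hdeg x, (P.isLift_extLift hdeg x).comp_mem y⟩

theorem extMul_apply_of_isLift (hconn : 𝔸.connected) (hdeg : ∀ i, P.degB i = 0)
    (hmin : P.toDGMod.Minimal ε) {y x : ExtSpace P} {g : P.M →ₗ[k] P.M} (hg : IsLift P g x)
    (m : P.M) : (P.extMul hdeg y x : P.M →ₗ[k] k) m = (y : P.M →ₗ[k] k) (g m) := by
  rw [← (P.isLift_extLift hdeg x).unique hconn hdeg hmin hg]
  rfl

theorem extMulOk_extMul (hconn : 𝔸.connected) (hdeg : ∀ i, P.degB i = 0)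
    (hmin : P.toDGMod.Minimal ε) : ExtMulOk P (P.extMul hdeg) where
  compat _ _ _ hg := P.extMul_apply_of_isLift hconn hdeg hmin hg
  add_left _ _ _ := rfl
  add_right y x₁ x₂ := by
    ext m
    rw [P.extMul_apply_of_isLift hconn hdeg hmin
      ((P.isLift_extLift hdeg x₁).add (P.isLift_extLift hdeg x₂))]
    simp [extMul]
  smul_left _ _ _ := rfl
  smul_right c y x := by
    ext m
    rw [P.extMul_apply_of_isLift hconn hdeg hmin ((P.isLift_extLift hdeg x).smul c)]
    simp [extMul]
  assoc z y x := by
    ext m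
    exact (P.extMul_apply_of_isLift hconn hdeg hmin
      ((P.isLift_extLift hdeg x).comp (P.isLift_extLift hdeg y)) m).symm
  one_mul x := by
    ext m
    exact ((P.isLift_extLift hdeg x).apply_eq_εP m).symm
  mul_one x := by
    ext m
    exact P.extMul_apply_of_isLift hconn hdeg hmin (isLift_id P) m

theorem extMul_mem_Fil (hconn : 𝔸.connected) (hdeg : ∀ i, P.degB i = 0)
    (hmin : P.toDGMod.Minimal ε) (n m : ℕ) (x y : ExtSpace P) (hx : x ∈ Fil P n)
    (hy : y ∈ Fil P m) : P.extMul hdeg y x ∈ Fil P (n + m) := by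
  have hg := P.isLift_extLift hdeg x
  rcases h : n + m with _ | s
  · exact Fil_zero P ▸ Submodule.mem_top
  refine (mem_Fil_succ_iff P s _).2 fun u hu => ?_
  change (y : P.M →ₗ[k] k) (P.extLift hdeg x u) = 0
  by_cases hs : s < n
  · rw [hg.map_stdF_eq_zero hconn hdeg hmin hx s hs u hu, map_zero]
  · obtain ⟨j, rfl⟩ : ∃ j, s = j + n := ⟨s - n, by omega⟩
    exact P.apply_eq_zero_of_mem_Fil hy (by omega) (hg.map_stdF_add hconn hdeg hmin hx j u hu)

theorem mem_Fil_one_iff (hconn : 𝔸.connected) (hdeg : ∀ i, P.degB i = 0)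
    (hmin : P.toDGMod.Minimal ε) {e : P.M} (he0 : e ∈ P.grading 0) (hde : P.dM e = 0)
    (hεe : P.εP e = 1) (x : ExtSpace P) : x ∈ Fil P 1 ↔ (x : P.M →ₗ[k] k) e = 0 := by
  refine ⟨fun hx => (mem_Fil_succ_iff P 0 x).1 hx e
    (P.mem_stdF_zero (P.mem_kE_of_mem_grading_zero hconn hdeg he0) hde), fun hxe => ?_⟩
  refine (mem_Fil_succ_iff P 0 x).2 fun u hu => (Submodule.mem_bot k).1
    (apply_mem_of_mem_span (x : P.M →ₗ[k] k) ε.ε (ExtSpace.apply_smul x) ?_ hu)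
  rintro u ⟨hu, hdu⟩
  rw [P.eq_smul_of_cocycle hconn hdeg hmin he0 hde hεe (P.kE_le_grading_zero hdeg hu) hdu,
    map_smul, hxe, smul_zero]
  exact zero_mem _

theorem finiteDimensional_extSpace : FiniteDimensional k (ExtSpace P) := by
  let Φ : ExtSpace P →ₗ[k] P.ι → k :=
    LinearMap.pi fun i => LinearMap.applyₗ (P.bas i) ∘ₗ (ExtSpace P).subtype
  refine FiniteDimensional.of_injective Φ (LinearMap.ker_eq_bot.1
    (LinearMap.ker_eq_bot'.2 fun x hx => Subtype.ext ?_))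
  exact P.eq_zero_of_apply_bas (ExtSpace.apply_smul x) fun i => congr_fun hx i

end SFR

theorem mulPow_mem_Fil {𝔸 : DGA k} {ε : 𝔸.Aug} {P : SFR ε}
    {mul : ExtSpace P → ExtSpace P → ExtSpace P}
    (hmul : ∀ (n m : ℕ) (x y : ExtSpace P), x ∈ Fil P n → y ∈ Fil P m →
      mul y x ∈ Fil P (n + m))
    {x : ExtSpace P} (hx : x ∈ Fil P 1) (n : ℕ) : mulPow P mul x n ∈ Fil P n := by
  induction n with
  | zero => exact Fil_zero P ▸ Submodule.mem_top
  | succ n ih => exact hmul n 1 _ x ih hx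

namespace ExtMulOk

variable {𝔸 : DGA k} {ε : 𝔸.Aug} {P : SFR ε}
  {mul : ExtSpace P → ExtSpace P → ExtSpace P}

abbrev toRing (h : ExtMulOk P mul) : Ring (ExtSpace P) :=
  { (inferInstance : AddCommGroup (ExtSpace P)) with
    mul := mul
    one := unitE P
    left_distrib := h.add_right
    right_distrib := h.add_left
    zero_mul := fun x => (by simpa using h.smul_left 0 0 x : mul 0 x = 0)
    mul_zero := fun x => (by simpa using h.smul_right 0 x 0 : mul x 0 = 0)
    mul_assoc := h.assoc
    one_mul := h.one_mul
    mul_one := h.mul_one }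

theorem exists_inv_of_apply_ne_zero (h : ExtMulOk P mul) (φ : ExtSpace P →ₗ[k] k)
    (hφ : φ (unitE P) = 1) (hnil : ∀ z, φ z = 0 → ∃ N, mulPow P mul z N = 0)
    {x : ExtSpace P} (hx : φ x ≠ 0) : ∃ y, mul y x = unitE P ∧ mul x y = unitE P := by
  let _ := h.toRing
  let _ : Algebra k (ExtSpace P) := Algebra.ofModule h.smul_left h.smul_right
  have hpow : ∀ z n, mulPow P mul z n = z ^ n := fun z n => by
    induction n with
    | zero => rfl
    | succ n ih => rw [pow_succ', ← ih]; rfl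
  obtain ⟨u, rfl⟩ := isUnit_of_apply_ne_zero φ hφ
    (fun z hz => (hnil z hz).imp fun N hN => (hpow z N).symm.trans hN) hx
  exact ⟨↑u⁻¹, u.inv_mul, u.mul_inv⟩

end ExtMulOk

/-- Let `A` be a Koszul DG algebra such that the trivial module `k` is
compact in `D(A)` (i.e. `k` has a minimal semifree resolution `P` with finite semibasis).
Then the Ext-algebra `E = Ext⁰_A(k,k)` is a finite dimensional local `k`-algebra with
residue field `E/J ≅ k`, where the Jacobson radical `J` coincides with the filtration
step `F₁` (its elements are nilpotent, its complement consists of units, and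
`E = k·1 ⊕ F₁`). -/
theorem ext_algebra_finite_local (𝔸 : DGA k) (hconn : 𝔸.connected) (ε : 𝔸.Aug)
    (hKoszul : ExtVanish 𝔸 ε) (P : SFR ε) (hmin : P.toDGMod.Minimal ε)
    (hcompact : Finite P.ι) :
    FiniteDimensional k ↥(ExtSpace P) ∧
    ∃ mul : ↥(ExtSpace P) → ↥(ExtSpace P) → ↥(ExtSpace P),
      ExtMulOk P mul ∧
      (∀ (n m : ℕ) (x y : ↥(ExtSpace P)), x ∈ Fil P n → y ∈ Fil P m →
        mul y x ∈ Fil P (n + m)) ∧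
      -- `F₁` is a nil (two-sided) ideal …
      (∀ x : ↥(ExtSpace P), x ∈ Fil P 1 → ∃ N : ℕ, mulPow P mul x N = 0) ∧
      -- … whose complement consists of units, so `E` is local with `J = F₁`
      (∀ x : ↥(ExtSpace P), x ∉ Fil P 1 →
        ∃ y, mul y x = unitE P ∧ mul x y = unitE P) ∧
      -- and the residue field is `k`:  `E = k·1 ⊕ J`
      IsCompl (Submodule.span k {unitE P}) (Fil P 1) := by
  have := Fintype.ofFinite P.ι
  have hdeg := P.degB_eq_zero hKoszul hmin
  obtain ⟨e, he0, hde, hεe⟩ := P.qis_surj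
  have hfil := P.extMul_mem_Fil hconn hdeg hmin
  have hnil : ∀ x ∈ Fil P 1, ∃ N, mulPow P (P.extMul hdeg) x N = 0 := fun x hx =>
    ⟨_, (Submodule.mem_bot k).1 (P.Fil_eq_bot ▸ mulPow_mem_Fil hfil hx _)⟩
  let φ : ExtSpace P →ₗ[k] k := LinearMap.applyₗ e ∘ₗ (ExtSpace P).subtype
  have hφ : Fil P 1 = LinearMap.ker φ :=
    Submodule.ext (P.mem_Fil_one_iff hconn hdeg hmin he0 hde hεe)
  have hφ1 : φ (unitE P) = 1 := hεe
  have hok := P.extMulOk_extMul hconn hdeg hmin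
  refine ⟨P.finiteDimensional_extSpace, P.extMul hdeg, hok, hfil, hnil, fun x hx => ?_,
    hφ ▸ isCompl_span_singleton_ker_of_apply_eq_one hφ1⟩
  exact hok.exists_inv_of_apply_ne_zero φ hφ1 (fun z hz => hnil z (hφ ▸ hz))
    (fun h => hx (hφ ▸ h))
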